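/- arXiv:1712.00200 — 7 statements merged into one kernel-verified Lean document; each statement's English description precedes it below -/
import Mathlib

section
/- For any finite connected graph F, the set S_F is unique: any two subsets of V(F) that contain no vertex redundant for themselves and are maximal under inclusion with this property are equal. -/
def Redundant {V : Type*} (Adj : V → V → Prop) (S : Set V) (a : V) : Prop :=
  ∃ b : V, b ≠ a ∧ ({u | Adj a u} ∩ S) ⊆ ({u | Adj b u} ∩ S)

def Irredundant {V : Type*} (Adj : V → V → Prop) (S : Set V) : Prop :=
  ∀ a ∈ S, ¬ Redundant Adj S a

lemma irredundant_union {V : Type*} (Adj : V → V → Prop) (S T : Set V)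
    (hS : Irredundant Adj S) (hT : Irredundant Adj T) :
    Irredundant Adj (S ∪ T) := by
  intro a ha ⟨b, hb, hsub⟩
  rcases ha with ha | ha
  · exact hS a ha ⟨b, hb, fun u ⟨hu1, hu2⟩ =>
      ⟨(hsub ⟨hu1, Or.inl hu2⟩).1, hu2⟩⟩
  · exact hT a ha ⟨b, hb, fun u ⟨hu1, hu2⟩ =>
      ⟨(hsub ⟨hu1, Or.inr hu2⟩).1, hu2⟩⟩

/-- For a finite connected graph `F`, any two irredundant subsets of `V(F)` that are
maximal under inclusion with this property are equal: `S_F` is unique. -/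
theorem stmt_1 {V : Type*} [Fintype V] (Adj : V → V → Prop) (hsymm : Symmetric Adj)
    (hconn : ∀ u v : V, Relation.ReflTransGen Adj u v)
    (S₁ S₂ : Set V)
    (h₁ : Irredundant Adj S₁) (h₁max : ∀ S' : Set V, Irredundant Adj S' → S₁ ⊆ S' → S' = S₁)
    (h₂ : Irredundant Adj S₂) (h₂max : ∀ S' : Set V, Irredundant Adj S' → S₂ ⊆ S' → S' = S₂) :
    S₁ = S₂ := by
  have hu := irredundant_union Adj S₁ S₂ h₁ h₂
  have e1 := h₁max _ hu Set.subset_union_left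
  have e2 := h₂max _ hu Set.subset_union_right
  exact e1.symm.trans e2
end

section
/- If F is a connected non-thermal graph with at least three vertices and D ⊆ S_F is distinguishing for some vertex α of F, then |D| ≥ 2. -/
/-- A homomorphism of graphs given by adjacency relations. -/
def IsHom {A B : Type*} (AdjG : A → A → Prop) (AdjH : B → B → Prop) (f : A → B) : Prop :=
  ∀ u v : A, AdjG u v → AdjH (f u) (f v)

open Classical in
/-- The map obtained from `f` by recolouring the vertex `v` to the colour `b`. -/
noncomputable def recol {A B : Type*} (f : A → B) (v : A) (b : B) : A → B :=
  fun x => if x = v then b else f x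

/-- `f` is a frozen homomorphism: it is a homomorphism and no single-vertex
recolouring of `f` yields a (different) homomorphism. -/
def Frozen {A B : Type*} (AdjG : A → A → Prop) (AdjH : B → B → Prop) (f : A → B) : Prop :=
  IsHom AdjG AdjH f ∧ ∀ (v : A) (b : B), b ≠ f v → ¬ IsHom AdjG AdjH (recol f v b)

def Distinguishing {V : Type*} (AdjF : V → V → Prop) (SF : Set V) (D : Set V) (a : V) : Prop :=
  D ⊆ SF ∧ D ⊆ {u | AdjF a u} ∧ ∀ b : V, D ⊆ {u | AdjF b u} → b = a

/-- If `F` is a finite connected non-thermal graph (i.e. `S_F ≠ ∅`) with at least three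
vertices and `D ⊆ S_F` is distinguishing for some vertex `a`, then `|D| ≥ 2`. -/
theorem stmt_6 {V : Type*} [Fintype V] (AdjF : V → V → Prop) (hsymm : Symmetric AdjF)
    (hconn : ∀ u v : V, Relation.ReflTransGen AdjF u v)
    (SF : Set V) (hirr : Irredundant AdjF SF)
    (hmax : ∀ S' : Set V, Irredundant AdjF S' → SF ⊆ S' → S' = SF)
    (hnonthermal : SF.Nonempty) (hcard : 3 ≤ Fintype.card V)
    (D : Set V) (a : V) (hD : Distinguishing AdjF SF D a) :
    2 ≤ D.ncard := by
  classical
  by_contra h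
  push_neg at h
  obtain h0 | h1 : D.ncard = 0 ∨ D.ncard = 1 := by omega
  · have hDe : D = ∅ := (Set.ncard_eq_zero (Set.toFinite D)).mp h0
    have hall : ∀ b : V, b = a := fun b => hD.2.2 b (by simp [hDe])
    have : Fintype.card V ≤ 1 :=
      Fintype.card_le_one_iff.mpr fun x y => (hall x).trans (hall y).symm
    omega
  · obtain ⟨d, rfl⟩ := Set.ncard_eq_one.mp h1
    have hdS : d ∈ SF := hD.1 rfl
    have had : AdjF a d := hD.2.1 rfl
    have huniq : ∀ b, AdjF b d → b = a := fun b hb => hD.2.2 b (by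
      intro u hu; rcases hu with rfl; exact hb)
    by_cases hex : ∃ b, b ≠ d ∧ AdjF a b
    · obtain ⟨b, hbd, hab⟩ := hex
      refine hirr d hdS ⟨b, hbd, ?_⟩
      rintro u ⟨hdu, huS⟩
      have hua : u = a := huniq u (hsymm hdu)
      subst hua
      exact ⟨hsymm hab, huS⟩
    · push_neg at hex
      have hNa : ∀ b, AdjF a b → b = d := fun b hb => by
        by_contra hbd; exact hex b hbd hb
      have key : ∀ x, Relation.ReflTransGen AdjF a x → x = a ∨ x = d := by
        intro x hx
        induction hx with
        | refl => exact Or.inl rfl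
        | tail hyy hadj ih =>
          rcases ih with rfl | rfl
          · exact Or.inr (hNa _ hadj)
          · exact Or.inl (huniq _ (hsymm hadj))
      have hsub : (Finset.univ : Finset V) ⊆ {a, d} := by
        intro x _
        rcases key x (hconn a x) with rfl | rfl <;> simp
      have : Fintype.card V ≤ 2 := by
        calc Fintype.card V = (Finset.univ : Finset V).card := rfl
        _ ≤ ({a, d} : Finset V).card := Finset.card_le_card hsub
        _ ≤ 2 := Finset.card_le_two
      omega
end

section
/- If H is a non-empty totally symmetric k-relation with k ≥ 3 containing no constant tuple, then H admits no 4-ary polymorphism φ satisfying φ(a,r,e,a) = φ(r,a,r,e) for all a,r,e. -/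
/-- If `R` is a non-empty totally symmetric `k`-relation (`k ≥ 3`) on a finite set `V`
containing no constant tuple, then `R` admits no 4-ary polymorphism `φ` satisfying
`φ(a,r,e,a) = φ(r,a,r,e)` for all `a, r, e`. -/
theorem stmt_10 {V : Type*} [Fintype V] (k : ℕ) (hk : 3 ≤ k) (R : Set (Fin k → V))
    (hne : R.Nonempty)
    (hsym : ∀ r ∈ R, ∀ r' : Fin k → V, Set.range r' = Set.range r → r' ∈ R)
    (hconst : ∀ v : V, (fun _ => v) ∉ R) :
    ¬ ∃ φ : (Fin 4 → V) → V,
        (∀ rs : Fin 4 → (Fin k → V), (∀ j, rs j ∈ R) →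
          (fun i => φ (fun j => rs j i)) ∈ R) ∧
        (∀ a r e : V, φ ![a, r, e, a] = φ ![r, a, r, e]) := by
  classical
  rintro ⟨φ, hpoly, hid⟩
  obtain ⟨r0, hr0⟩ := hne
  have hrange : ∀ r : Fin k → V, (↑(Finset.univ.image r) : Set V) = Set.range r := by
    intro r
    rw [Finset.coe_image, Finset.coe_univ, Set.image_univ]
  have key : ∀ n : ℕ, ∀ r : Fin k → V, r ∈ R → (Finset.univ.image r).card ≤ n → False := by
    intro n
    induction n with
    | zero =>
      intro r hr hcard
      have h0 : r ⟨0, by omega⟩ ∈ Finset.univ.image r :=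
        Finset.mem_image_of_mem r (Finset.mem_univ _)
      have := Finset.card_pos.mpr ⟨_, h0⟩
      omega
    | succ n IH =>
      intro r hr hcard
      by_cases hc1 : (Finset.univ.image r).card ≤ 1
      · have h0 : r ⟨0, by omega⟩ ∈ Finset.univ.image r :=
          Finset.mem_image_of_mem r (Finset.mem_univ _)
        have hconst' : r = fun _ => r ⟨0, by omega⟩ := by
          funext i
          exact Finset.card_le_one.mp hc1 _ (Finset.mem_image_of_mem r (Finset.mem_univ _)) _ h0
        exact hconst _ (hconst' ▸ hr)
      by_cases hc2 : (Finset.univ.image r).card = 2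
      · obtain ⟨a, b, hab, hSab⟩ := Finset.card_eq_two.mp hc2
        have hSr : Set.range r = {a, b} := by
          rw [← hrange r, hSab]; simp
        set i0 : Fin k := ⟨0, by omega⟩ with hi0
        set i1 : Fin k := ⟨1, by omega⟩ with hi1
        set i2 : Fin k := ⟨2, by omega⟩ with hi2
        have hne01 : i1 ≠ i0 := by simp [hi0, hi1]
        have hne20 : i2 ≠ i0 := by simp [hi0, hi2]
        have hne21 : i2 ≠ i1 := by simp [hi1, hi2]
        set cols : Fin k → Fin 4 → V := fun i =>
          if i = i0 then ![a,b,a,a] else if i = i1 then ![b,a,a,b] else ![b,a,b,a] with hcols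
        set rs : Fin 4 → Fin k → V := fun j i => cols i j with hrsdef
        have hmem : ∀ j, rs j ∈ R := by
          intro j
          refine hsym r hr _ ?_
          rw [hSr]
          apply Set.eq_of_subset_of_subset
          · rintro v ⟨i, rfl⟩
            simp only [hrsdef, hcols]
            split_ifs <;> fin_cases j <;> simp
          · rintro v (rfl | rfl)
            · fin_cases j
              · exact ⟨i0, by simp [hrsdef, hcols]⟩
              · exact ⟨i1, by simp [hrsdef, hcols, hne01]⟩
              · exact ⟨i0, by simp [hrsdef, hcols]⟩
              · exact ⟨i0, by simp [hrsdef, hcols]⟩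
            · fin_cases j
              · exact ⟨i1, by simp [hrsdef, hcols, hne01]⟩
              · exact ⟨i0, by simp [hrsdef, hcols]⟩
              · exact ⟨i2, by simp [hrsdef, hcols, hne20, hne21]⟩
              · exact ⟨i1, by simp [hrsdef, hcols, hne01]⟩
        have hu : (fun i => φ (fun j => rs j i)) ∈ R := hpoly rs hmem
        have hueq : (fun i => φ (fun j => rs j i)) = fun _ => φ ![a,b,a,a] := by
          funext i
          have hc : (fun j => rs j i) = cols i := by
            funext j; simp only [hrsdef]
          rw [hc]
          simp only [hcols]
          split_ifs
          · rfl
          · exact hid b a a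
          · exact (hid a b a).symm
        exact hconst _ (hueq ▸ hu)
      · have hm3 : 3 ≤ (Finset.univ.image r).card := by omega
        set S := Finset.univ.image r with hS
        set m := S.card with hm
        have hmk : m ≤ k := by
          calc m ≤ Finset.univ.card := Finset.card_image_le
          _ = k := by simp
        set g : Fin m → V := fun l => ((S.equivFin.symm l : S) : V) with hg
        have hg1 : ∀ l, g l ∈ S := fun l => (S.equivFin.symm l).2
        have hg2 : ∀ v ∈ S, ∃ l, g l = v := by
          intro v hv
          exact ⟨S.equivFin ⟨v, hv⟩, by simp [hg]⟩
        set z0 : Fin m := ⟨0, by omega⟩ with hz0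
        set z1 : Fin m := ⟨1, by omega⟩ with hz1
        set z2 : Fin m := ⟨2, by omega⟩ with hz2
        have h01 : z1 ≠ z0 := by simp [hz0, hz1]
        have h20 : z2 ≠ z0 := by simp [hz0, hz2]
        have h21 : z2 ≠ z1 := by simp [hz1, hz2]
        set π : Fin 4 → Fin m → Fin m := fun j l =>
          if l = z0 then ![z0, z1, z0, z2] j
          else if l = z1 then ![z1, z0, z2, z1] j
          else if l = z2 then ![z2, z2, z1, z0] j
          else l with hπ
        have hπs : ∀ j, Function.Surjective (π j) := by
          intro j l
          by_cases e0 : l = z0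
          · subst e0
            fin_cases j
            · exact ⟨z0, by simp [hπ]⟩
            · exact ⟨z1, by simp [hπ, h01]⟩
            · exact ⟨z0, by simp [hπ]⟩
            · exact ⟨z2, by simp [hπ, h20, h21]⟩
          by_cases e1 : l = z1
          · subst e1
            fin_cases j
            · exact ⟨z1, by simp [hπ, h01]⟩
            · exact ⟨z0, by simp [hπ]⟩
            · exact ⟨z2, by simp [hπ, h20, h21]⟩
            · exact ⟨z1, by simp [hπ, h01]⟩
          by_cases e2 : l = z2
          · subst e2
            fin_cases j
            · exact ⟨z2, by simp [hπ, h20, h21]⟩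
            · exact ⟨z2, by simp [hπ, h20, h21]⟩
            · exact ⟨z1, by simp [hπ, h01]⟩
            · exact ⟨z0, by simp [hπ]⟩
          · exact ⟨l, by simp [hπ, e0, e1, e2]⟩
        set idx : Fin k → Fin m := fun i => if h : (i : ℕ) < m then ⟨i, h⟩ else z0 with hidx
        set rs : Fin 4 → Fin k → V := fun j i => g (π j (idx i)) with hrs
        have hmem : ∀ j, rs j ∈ R := by
          intro j
          refine hsym r hr _ ?_
          rw [← hrange r, ← hS]
          apply Set.eq_of_subset_of_subset
          · rintro v ⟨i, rfl⟩
            simp only [hrs]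
            exact hg1 _
          · intro v hv
            obtain ⟨l, rfl⟩ := hg2 v hv
            obtain ⟨l', hl'⟩ := hπs j l
            refine ⟨⟨(l' : ℕ), lt_of_lt_of_le l'.isLt hmk⟩, ?_⟩
            have hii : idx ⟨(l' : ℕ), lt_of_lt_of_le l'.isLt hmk⟩ = l' := by
              simp [hidx, l'.isLt]
            simp [hrs, hii, hl']
        have humem : (fun i => φ (fun j => rs j i)) ∈ R := hpoly rs hmem
        set w : Fin m → V := fun l =>
          if l = z0 then φ ![g z0, g z1, g z0, g z2]
          else if l = z2 then φ ![g z2, g z2, g z1, g z0]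
          else φ ![g l, g l, g l, g l] with hw
        set ρ : Fin k → Fin m := fun i => if idx i = z1 then z0 else idx i with hρ
        have hueq : ∀ i, φ (fun j => rs j i) = w (ρ i) := by
          intro i
          have hc : (fun j => rs j i) = fun j => g (π j (idx i)) := by
            funext j; simp only [hrs]
          rw [hc]
          by_cases e1 : idx i = z1
          · have hρ1 : ρ i = z0 := by simp [hρ, e1]
            rw [hρ1]
            simp only [e1]
            have hcol1 : (fun j => g (π j z1)) = ![g z1, g z0, g z2, g z1] := by
              funext j
              fin_cases j <;> simp [hπ, h01]
            rw [hcol1, hid (g z1) (g z0) (g z2)]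
            simp [hw]
          · have hρ2 : ρ i = idx i := by simp [hρ, e1]
            rw [hρ2]
            by_cases e0 : idx i = z0
            · simp only [e0]
              have hcol0 : (fun j => g (π j z0)) = ![g z0, g z1, g z0, g z2] := by
                funext j
                fin_cases j <;> simp [hπ]
              rw [hcol0]
              simp [hw]
            · by_cases e2 : idx i = z2
              · simp only [e2]
                have hcol2 : (fun j => g (π j z2)) = ![g z2, g z2, g z1, g z0] := by
                  funext j
                  fin_cases j <;> simp [hπ, h20, h21]
                rw [hcol2]
                simp [hw, h20, h21]
              · have hcoll : (fun j => g (π j (idx i)))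
                    = ![g (idx i), g (idx i), g (idx i), g (idx i)] := by
                  funext j
                  fin_cases j <;> simp [hπ, e0, e1, e2]
                rw [hcoll]
                simp [hw, e0, e2]
        have hsub : Finset.univ.image (fun i => φ (fun j => rs j i))
            ⊆ (Finset.univ.erase z1).image w := by
          intro v hv
          obtain ⟨i, _, rfl⟩ := Finset.mem_image.mp hv
          refine Finset.mem_image.mpr ⟨ρ i, ?_, (hueq i).symm⟩
          refine Finset.mem_erase.mpr ⟨?_, Finset.mem_univ _⟩
          by_cases e1 : idx i = z1
          · simp [hρ, e1, Ne.symm h01]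
          · simp [hρ, e1]
        have hcard2 : (Finset.univ.image (fun i => φ (fun j => rs j i))).card ≤ n := by
          calc (Finset.univ.image (fun i => φ (fun j => rs j i))).card
              ≤ ((Finset.univ.erase z1).image w).card := Finset.card_le_card hsub
            _ ≤ (Finset.univ.erase z1).card := Finset.card_image_le
            _ = m - 1 := by rw [Finset.card_erase_of_mem (Finset.mem_univ _)]; simp
            _ ≤ n := by omega
        exact IH _ humem hcard2
  exact key _ r0 hr0 le_rfl
end

section
/- Every complete multipartite graph in which every part has size at least two is thermal: no graph G with V(G) ≠ ∅ admits a frozen homomorphism to it. -/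
/-- A complete multipartite graph in which every part has size at least two (given by the
part map `p`, with adjacency `p u ≠ p v`) is thermal: no nonempty graph `G` admits a
frozen homomorphism to it. -/
theorem stmt_11 {V ι : Type*} (p : V → ι)
    (hparts : ∀ v : V, ∃ w : V, w ≠ v ∧ p w = p v) :
    ¬ ∃ (VG : Type) (AdjG : VG → VG → Prop) (f : VG → V),
        Nonempty VG ∧ Symmetric AdjG ∧ Frozen AdjG (fun u v => p u ≠ p v) f := by
  rintro ⟨VG, AdjG, f, ⟨x⟩, hsym, hhom, hfroz⟩
  obtain ⟨w, hw, hpw⟩ := hparts (f x)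
  apply hfroz x w hw
  intro u v huv
  simp only [recol]
  split <;> split
  · exact fun _ => hhom x x (by rwa [‹u = x›, ‹v = x›] at huv) rfl
  · subst ‹u = x›; exact fun h => hhom u v huv (hpw ▸ h)
  · subst ‹v = x›; exact fun h => hhom u v huv (h.trans hpw)
  · exact hhom u v huv
end

section
/- For k ≥ 2, every homomorphism from the odd wheel W_{2k+1} to itself is frozen; in particular it maps the hub α to α and restricts to an automorphism of the outer (2k+1)-cycle. -/
/-- The vertex set of the wheel `W_{2k+1}`: `none` is the hub `α`, `some i` the rim. -/
abbrev WheelV (k : ℕ) : Type := Option (ZMod (2 * k + 1))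

/-- Adjacency in the wheel `W_{2k+1}`: the hub is adjacent to every rim vertex and rim
vertices `i, j` are adjacent iff they are consecutive on the `(2k+1)`-cycle. -/
def WheelAdj (k : ℕ) : WheelV k → WheelV k → Prop
  | none, none => False
  | none, some _ => True
  | some _, none => True
  | some i, some j => j = i + 1 ∨ i = j + 1

/-!
If the hub went to a rim vertex `c`, the rim would map into the neighbourhood of `c`, a path
with the hub in the middle, so the rim vertices sent to the hub would alternate around an odd
cycle. Hence `f` fixes the hub and restricts to an endomorphism of the odd rim, whose `±1`
steps must all agree, making it a rotation or a reflection. Freezing holds because every vertex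
is the only common neighbour of the images of its neighbours: for a rim vertex these include
two distinct rim vertices, and the rim has no 4-cycle.
-/

open Function Finset

section Cycle

variable {n : ℕ}

lemma ZMod.natCast_ne_zero_of_lt {m : ℕ} (hm : 0 < m) (hmn : m < n) : (m : ZMod n) ≠ 0 := by
  rw [Ne, ZMod.natCast_eq_zero_iff]
  exact Nat.not_dvd_of_pos_of_lt hm hmn

lemma ZMod.periodic_one_apply_eq [NeZero n] {β : Type*} {h : ZMod n → β} (hh : Periodic h 1)
    (i : ZMod n) : h i = h 0 := by
  simpa using hh.nat_mul_eq i.val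

lemma ZMod.not_forall_apply_add_one_eq_not (hn : Odd n) (p : ZMod n → Bool) :
    ¬ ∀ i, p (i + 1) = !p i := by
  obtain ⟨m, rfl⟩ := hn
  intro hp
  have hp2 : Periodic p 2 := fun i => by
    rw [show i + 2 = i + 1 + 1 by ring, hp, hp, Bool.not_not]
  have hwrap : (m : ZMod (2 * m + 1)) * 2 + 1 = 0 := by
    have h := ZMod.natCast_self (2 * m + 1)
    push_cast at h
    linear_combination h
  have := hp (m * 2)
  rw [hwrap, hp2.nat_mul_eq] at this
  exact (Bool.eq_not_self _).mp this

/-- A closed walk of odd length `n` in steps of `±1` in `ZMod n` cannot change direction: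
if `d` steps go down, its displacement `n - 2d` vanishes mod `n`, so `n ∣ d`. -/
lemma ZMod.forall_add_one_or_forall_sub_one [NeZero n] (hn : Odd n) {g : ZMod n → ZMod n}
    (hg : ∀ i, g (i + 1) = g i + 1 ∨ g (i + 1) = g i - 1) :
    (∀ i, g (i + 1) = g i + 1) ∨ (∀ i, g (i + 1) = g i - 1) := by
  classical
  set down : Finset (ZMod n) := {i | g (i + 1) = g i - 1}
  have hstep : ∀ i, g (i + 1) - g i = 1 - 2 * if g (i + 1) = g i - 1 then 1 else 0 := by
    intro i
    split_ifs with h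
    · rw [h]; ring
    · rw [(hg i).resolve_right h]; ring
  have hwalk : ∑ i, (g (i + 1) - g i) = 0 := by
    rw [sum_sub_distrib, show ∑ i, g (i + 1) = ∑ i, g i from Equiv.sum_comp (Equiv.addRight 1) g,
      sub_self]
  simp only [hstep, sum_sub_distrib, ← mul_sum, sum_boole, sum_const, card_univ, ZMod.card,
    nsmul_eq_mul, mul_one, ZMod.natCast_self, zero_sub, neg_eq_zero] at hwalk
  have hdvd : n ∣ #down := hn.coprime_two_right.dvd_of_dvd_mul_left <|
    (ZMod.natCast_eq_zero_iff _ _).mp (by exact_mod_cast hwalk)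
  rcases Nat.eq_zero_or_pos #down with hempty | hpos
  · left
    have hup : ∀ i, g (i + 1) ≠ g i - 1 := by simpa [down] using card_eq_zero.mp hempty
    exact fun i => (hg i).resolve_right (hup i)
  · right
    have hall : down = univ := eq_univ_of_card down <|
      le_antisymm (card_le_univ down) (by simpa using Nat.le_of_dvd hpos hdvd)
    simpa [down, eq_univ_iff_forall] using hall

lemma ZMod.exists_eq_add_or_eq_sub [NeZero n] (hn : Odd n) {g : ZMod n → ZMod n}
    (hg : ∀ i, g (i + 1) = g i + 1 ∨ g (i + 1) = g i - 1) :
    ∃ c, g = (c + ·) ∨ g = (c - ·) := by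
  refine ⟨g 0, ?_⟩
  rcases forall_add_one_or_forall_sub_one hn hg with h | h
  · left
    have hper : Periodic (fun i => g i - i) 1 := fun i => by simp only [h]; ring
    funext i
    linear_combination ZMod.periodic_one_apply_eq hper i
  · right
    have hper : Periodic (fun i => g i + i) 1 := fun i => by simp only [h]; ring
    funext i
    linear_combination ZMod.periodic_one_apply_eq hper i

end Cycle

lemma frozen_of_forall_adj {A B : Type*} {AdjG : A → A → Prop} {AdjH : B → B → Prop} {f : A → B}
    (hG : ∀ v, ¬ AdjG v v) (hf : IsHom AdjG AdjH f)
    (h : ∀ v b, (∀ u, AdjG v u → AdjH b (f u)) → b = f v) : Frozen AdjG AdjH f := by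
  refine ⟨hf, fun v b hb hrecol => hb (h v b fun u hu => ?_)⟩
  have hne : u ≠ v := by rintro rfl; exact hG u hu
  simpa [recol, hne] using hrecol v u hu

section Wheel

variable {k : ℕ}

@[simp] lemma wheelAdj_some_some {i j : ZMod (2 * k + 1)} :
    WheelAdj k (some i) (some j) ↔ j = i + 1 ∨ i = j + 1 := Iff.rfl

lemma wheelAdj_irrefl (hk : 1 ≤ k) (v : WheelV k) : ¬ WheelAdj k v v := by
  have h1 : (1 : ZMod (2 * k + 1)) ≠ 0 := by
    exact_mod_cast ZMod.natCast_ne_zero_of_lt one_pos (by omega)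
  rcases v with _ | i
  · exact id
  · simp only [wheelAdj_some_some, or_self]
    intro h
    exact h1 (by linear_combination -h)

lemma not_wheelAdj_of_wheelAdj_of_wheelAdj (hk : 2 ≤ k) {c x y : ZMod (2 * k + 1)}
    (hx : WheelAdj k (some c) (some x)) (hy : WheelAdj k (some c) (some y)) :
    ¬ WheelAdj k (some x) (some y) := by
  have h3 : (3 : ZMod (2 * k + 1)) ≠ 0 := by
    exact_mod_cast ZMod.natCast_ne_zero_of_lt (m := 3) (by norm_num) (by omega)
  simp only [wheelAdj_some_some] at *
  grind

lemma eq_of_wheelAdj_of_wheelAdj (hk : 2 ≤ k) {a b x m : ZMod (2 * k + 1)} (hab : a ≠ b)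
    (hxa : WheelAdj k (some x) (some a)) (hxb : WheelAdj k (some x) (some b))
    (hma : WheelAdj k (some m) (some a)) (hmb : WheelAdj k (some m) (some b)) : m = x := by
  have h4 : (4 : ZMod (2 * k + 1)) ≠ 0 := by
    exact_mod_cast ZMod.natCast_ne_zero_of_lt (m := 4) (by norm_num) (by omega)
  simp only [wheelAdj_some_some] at *
  grind

variable {f : WheelV k → WheelV k}

lemma IsHom.wheel_map_none (hk : 2 ≤ k) (hf : IsHom (WheelAdj k) (WheelAdj k) f) :
    f none = none := by
  rcases hc : f none with _ | c
  · rfl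
  refine (ZMod.not_forall_apply_add_one_eq_not (odd_two_mul_add_one k)
    (fun i => (f (some i)).isNone) fun i => ?_).elim
  have hx := hf none (some i) trivial
  have hy := hf none (some (i + 1)) trivial
  have hxy := hf (some i) (some (i + 1)) (Or.inl rfl)
  rw [hc] at hx hy
  generalize f (some i) = x at hx hxy
  generalize f (some (i + 1)) = y at hy hxy
  rcases x with _ | x <;> rcases y with _ | y
  · exact (hxy : False).elim
  · rfl
  · rfl
  · exact (not_wheelAdj_of_wheelAdj_of_wheelAdj hk hx hy hxy).elim

lemma IsHom.exists_eq_option_map (hf : IsHom (WheelAdj k) (WheelAdj k) f)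
    (hnone : f none = none) : ∃ g : ZMod (2 * k + 1) → ZMod (2 * k + 1), f = Option.map g := by
  have hrim : ∀ i, ∃ j, f (some i) = some j := fun i => by
    have hi := hf (some i) none trivial
    rw [hnone] at hi
    rcases hfi : f (some i) with _ | j
    · rw [hfi] at hi
      exact hi.elim
    · exact ⟨j, rfl⟩
  choose g hg using hrim
  exact ⟨g, funext fun | none => hnone | some i => hg i⟩

lemma IsHom.bijective_of_option_map {g : ZMod (2 * k + 1) → ZMod (2 * k + 1)}
    (hf : IsHom (WheelAdj k) (WheelAdj k) (Option.map g)) : Bijective g := by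
  have hstep : ∀ i, g (i + 1) = g i + 1 ∨ g (i + 1) = g i - 1 := fun i =>
    (hf (some i) (some (i + 1)) (Or.inl rfl)).imp id fun h => eq_sub_of_add_eq h.symm
  obtain ⟨c, rfl | rfl⟩ := ZMod.exists_eq_add_or_eq_sub (odd_two_mul_add_one k) hstep
  · exact (Equiv.addLeft c).bijective
  · exact (Equiv.subLeft c).bijective

lemma frozen_option_map (hk : 2 ≤ k) {g : ZMod (2 * k + 1) → ZMod (2 * k + 1)}
    (hf : IsHom (WheelAdj k) (WheelAdj k) (Option.map g)) (hg : Bijective g) :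
    Frozen (WheelAdj k) (WheelAdj k) (Option.map g) := by
  have h2 : (2 : ZMod (2 * k + 1)) ≠ 0 := by
    exact_mod_cast ZMod.natCast_ne_zero_of_lt two_pos (by omega)
  refine frozen_of_forall_adj (wheelAdj_irrefl (by omega)) hf ?_
  rintro (_ | i) (_ | m) hb
  · rfl
  · obtain ⟨j, rfl⟩ := hg.2 m
    exact (wheelAdj_irrefl (by omega) _ (hb (some j) trivial)).elim
  · exact (hb none trivial).elim
  · have hne : g (i + 1) ≠ g (i - 1) := fun h => h2 (by linear_combination hg.1 h)
    exact congrArg some <| eq_of_wheelAdj_of_wheelAdj hk hne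
      (hf (some i) (some (i + 1)) (Or.inl rfl)) (hf (some i) (some (i - 1)) (Or.inr (by ring)))
      (hb (some (i + 1)) (Or.inl rfl)) (hb (some (i - 1)) (Or.inr (by ring)))

end Wheel

/-- For `k ≥ 2`, every homomorphism from the odd wheel `W_{2k+1}` to itself is frozen;
in particular it maps the hub to the hub and is an automorphism (it is bijective and
restricts to an automorphism of the outer `(2k+1)`-cycle). -/
theorem stmt_12 (k : ℕ) (hk : 2 ≤ k) (f : WheelV k → WheelV k)
    (hf : IsHom (WheelAdj k) (WheelAdj k) f) :
    Frozen (WheelAdj k) (WheelAdj k) f ∧ f none = none ∧ Function.Bijective f := by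
  obtain ⟨g, rfl⟩ := hf.exists_eq_option_map (hf.wheel_map_none hk)
  have hg : Bijective g := hf.bijective_of_option_map
  exact ⟨frozen_option_map hk hf hg, rfl, (Equiv.optionCongr (Equiv.ofBijective g hg)).bijective⟩
end

section
/- For 3 ≤ r ≤ 2k, the even cycle C_{2r} is C_{2k+1}-mixing: any two homomorphisms from C_{2r} to C_{2k+1} can be connected by a sequence of single-vertex recolourings through homomorphisms. -/
/-- Adjacency on the cycle `C_n` with vertex set `ZMod n`: `i ~ j` iff `j = i ± 1`. -/
def CycAdj (n : ℕ) (i j : ZMod n) : Prop := j = i + 1 ∨ i = j + 1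

/-- One step of reconfiguration: both maps are homomorphisms and they differ in exactly
one vertex. -/
def Step {A B : Type*} (AdjG : A → A → Prop) (AdjH : B → B → Prop) (f g : A → B) : Prop :=
  IsHom AdjG AdjH f ∧ IsHom AdjG AdjH g ∧ ∃ v : A, f v ≠ g v ∧ ∀ u : A, u ≠ v → f u = g u

/-!
A homomorphism `C_n → C_m` is a closed walk in `C_m`; lifting it to the universal cover `ℤ` gives
an integer height function changing by `±1` along every edge. For `n = 2r` even and `m = 2k + 1`
odd with `n < 2m`, the lifted walk closes up in `ℤ` (its displacement is an even multiple of `m`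
of absolute value at most `n`), so every homomorphism is the projection of a height function.
Two height functions `F`, `T` of the same parity are joined by flips: at a vertex `v` maximising
`F - T > 0`, and among those maximising `F`, both neighbours of `v` have height `F v - 1`, so
lowering `F v` by `2` is a legal recolouring that decreases `∑ |F - T|`; the case `F - T < 0` is
the mirror image. A parity mismatch is removed by adding the odd number `m` to one lift.
-/

open Finset Function

section Height

variable {n : ℕ}

def IsHeight (F : ZMod n → ℤ) : Prop :=
  ∀ i, F (i + 1) = F i + 1 ∨ F (i + 1) = F i - 1

/-- When both neighbours of `v` carry the same value, this turns a local extremum at `v` into the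
opposite one. -/
def flipAt (F : ZMod n → ℤ) (v : ZMod n) : ZMod n → ℤ :=
  update F v (2 * F (v + 1) - F v)

variable {F G : ZMod n → ℤ} {v : ZMod n}

lemma flipAt_self : flipAt F v v = 2 * F (v + 1) - F v := update_self ..

lemma flipAt_of_ne {u : ZMod n} (h : u ≠ v) : flipAt F v u = F u := update_of_ne h ..

namespace IsHeight

lemma neg (hF : IsHeight F) : IsHeight (-F) := fun i => by
  have := hF i
  simp only [Pi.neg_apply]
  omega

lemma add_const (hF : IsHeight F) (c : ℤ) : IsHeight (fun i => F i + c) := fun i => by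
  have := hF i
  dsimp only
  omega

lemma sub_one (hF : IsHeight F) (i : ZMod n) : F (i - 1) = F i + 1 ∨ F (i - 1) = F i - 1 := by
  have := hF (i - 1)
  rw [sub_add_cancel] at this
  omega

lemma isHom_intCast_comp (hF : IsHeight F) (m : ℕ) :
    IsHom (CycAdj n) (CycAdj m) (Int.cast ∘ F : ZMod n → ZMod m) := by
  have forward : ∀ i, CycAdj m (F i : ZMod m) (F (i + 1)) := fun i => by
    rcases hF i with h | h <;> rw [h] <;> push_cast
    · exact Or.inl rfl
    · exact Or.inr (by ring)
  rintro u v (rfl | rfl)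
  · exact forward u
  · exact (forward v).symm

lemma two_dvd_sub [NeZero n] (hF : IsHeight F) (hG : IsHeight G) (h0 : 2 ∣ F 0 - G 0)
    (i : ZMod n) : 2 ∣ F i - G i := by
  suffices ∀ j : ℕ, 2 ∣ F j - G j by simpa only [ZMod.natCast_zmod_val] using this i.val
  intro j
  induction j with
  | zero => simpa using h0
  | succ j ih =>
    have := hF j
    have := hG j
    push_cast
    omega

lemma flipAt (hF : IsHeight F) (hv : F (v - 1) = F (v + 1)) : IsHeight (flipAt F v) := by
  have hsucc : v + 1 ≠ v := fun h => by
    have := hF v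
    rw [h] at this
    omega
  intro i
  rcases eq_or_ne i v with rfl | hi
  · rw [flipAt_self, flipAt_of_ne hsucc]
    have := hF i
    omega
  rcases eq_or_ne (i + 1) v with rfl | hi1
  · rw [flipAt_self, flipAt_of_ne hi]
    rw [add_sub_cancel_right] at hv
    have := hF (i + 1)
    omega
  · rw [flipAt_of_ne hi, flipAt_of_ne hi1]
    exact hF i

end IsHeight

lemma step_flipAt {m : ℕ} (hm : 3 ≤ m) (hF : IsHeight F) (hv : F (v - 1) = F (v + 1)) :
    Step (CycAdj n) (CycAdj m) (Int.cast ∘ F) (Int.cast ∘ flipAt F v) := by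
  refine ⟨hF.isHom_intCast_comp m, (hF.flipAt hv).isHom_intCast_comp m, v, ?_,
    fun u hu => by simp only [comp_apply, flipAt_of_ne hu]⟩
  -- the flip moves `F v` by `±2`, and `2 ≠ 0` in `ZMod m`
  have two_ne_zero : ((2 : ℕ) : ZMod m) ≠ 0 := by
    rw [Ne, ZMod.natCast_eq_zero_iff]
    exact fun h => by have := Nat.le_of_dvd two_pos h; omega
  simp only [comp_apply, flipAt_self]
  intro h
  apply two_ne_zero
  rcases hF v with h' | h' <;> rw [h'] at h <;> push_cast at h ⊢
  · linear_combination -h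
  · linear_combination h

lemma exists_peak [NeZero n] {T : ZMod n → ℤ} (hF : IsHeight F) (hT : IsHeight T)
    (hpar : ∀ i, 2 ∣ F i - T i) (h : ∃ i, T i < F i) :
    ∃ v, F (v - 1) = F v - 1 ∧ F (v + 1) = F v - 1 ∧ T v + 2 ≤ F v := by
  obtain ⟨w, -, hw⟩ := exists_max_image univ (fun i => F i - T i) univ_nonempty
  -- among the maximisers of `F - T`, take one where `F` is largest
  obtain ⟨v, hv, hvmax⟩ := exists_max_image {i | F i - T i = F w - T w} F ⟨w, by simp⟩
  rw [mem_filter] at hv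
  have below : ∀ u, (F u = F v + 1 ∨ F u = F v - 1) → (T u = T v + 1 ∨ T u = T v - 1) →
      F u = F v - 1 := by
    intro u hFu hTu
    have := hw u (mem_univ u)
    have := hpar u
    have := hpar v
    by_cases hu : F u - T u = F w - T w
    · have := hvmax u (by simp [hu])
      omega
    · omega
  obtain ⟨i, hi⟩ := h
  have := hw i (mem_univ i)
  have := hpar v
  exact ⟨v, below _ (hF.sub_one v) (hT.sub_one v), below _ (hF v) (hT v), by omega⟩

lemma exists_flipAt_closer [NeZero n] {T : ZMod n → ℤ} (hF : IsHeight F) (hT : IsHeight T)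
    (hpar : ∀ i, 2 ∣ F i - T i) (hne : F ≠ T) :
    ∃ v, F (v - 1) = F (v + 1) ∧ (2 * F (v + 1) - F v - T v).natAbs < (F v - T v).natAbs := by
  obtain ⟨i, hi⟩ := ne_iff.mp hne
  rcases hi.lt_or_gt with hlt | hgt
  · obtain ⟨v, h₁, h₂, h₃⟩ := exists_peak hF.neg hT.neg
      (fun i => by simpa [sub_eq_add_neg, add_comm] using (hpar i).neg_right) ⟨i, by simpa⟩
    simp only [Pi.neg_apply] at h₁ h₂ h₃
    exact ⟨v, by omega, by omega⟩
  · obtain ⟨v, h₁, h₂, h₃⟩ := exists_peak hF hT hpar ⟨i, hgt⟩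
    exact ⟨v, by omega, by omega⟩

lemma sum_natAbs_sub_update_lt {ι : Type*} [Fintype ι] [DecidableEq ι] {f g : ι → ℤ} {v : ι}
    {a : ℤ} (h : (a - g v).natAbs < (f v - g v).natAbs) :
    ∑ i, (update f v a i - g i).natAbs < ∑ i, (f i - g i).natAbs := by
  refine sum_lt_sum (fun i _ => ?_) ⟨v, mem_univ v, by rwa [update_self]⟩
  rcases eq_or_ne i v with rfl | hi
  · rw [update_self]
    exact h.le
  · rw [update_of_ne hi]

theorem reachable_of_two_dvd [NeZero n] {m : ℕ} (hm : 3 ≤ m) (F T : ZMod n → ℤ)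
    (hF : IsHeight F) (hT : IsHeight T) (hpar : ∀ i, 2 ∣ F i - T i) :
    Relation.ReflTransGen (Step (CycAdj n) (CycAdj m)) (Int.cast ∘ F) (Int.cast ∘ T) := by
  by_cases hFT : F = T
  · rw [hFT]
  obtain ⟨v, hv, hcloser⟩ := exists_flipAt_closer hF hT hpar hFT
  have hpar' : ∀ i, 2 ∣ flipAt F v i - T i := by
    intro i
    rcases eq_or_ne i v with rfl | hi
    · have := hpar i
      rw [flipAt_self]
      omega
    · rw [flipAt_of_ne hi]
      exact hpar i
  exact .head (step_flipAt hm hF hv) (reachable_of_two_dvd hm _ T (hF.flipAt hv) hT hpar')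
termination_by ∑ i, (F i - T i).natAbs
decreasing_by exact sum_natAbs_sub_update_lt hcloser

theorem reachable_of_odd [NeZero n] {m : ℕ} (hm : Odd m) (hm3 : 3 ≤ m)
    (hF : IsHeight F) (hG : IsHeight G) :
    Relation.ReflTransGen (Step (CycAdj n) (CycAdj m)) (Int.cast ∘ F) (Int.cast ∘ G) := by
  by_cases h0 : 2 ∣ F 0 - G 0
  · exact reachable_of_two_dvd hm3 F G hF hG (hF.two_dvd_sub hG h0)
  -- otherwise lift `G` by the odd number `m`, which fixes the parity and not the projection
  have hG' := hG.add_const m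
  have hproj : (Int.cast ∘ fun i => G i + m : ZMod n → ZMod m) = Int.cast ∘ G := by
    funext i
    simp
  rw [← hproj]
  refine reachable_of_two_dvd hm3 F _ hF hG' (hF.two_dvd_sub hG' ?_)
  obtain ⟨j, rfl⟩ := hm
  push_cast
  omega

end Height

section Lift

variable {n m : ℕ} {f : ZMod n → ZMod m}

def stepSign (f : ZMod n → ZMod m) (i : ZMod n) : ℤ :=
  if f (i + 1) = f i + 1 then 1 else -1

def walk (f : ZMod n → ZMod m) (j : ℕ) : ℤ :=
  ∑ l ∈ range j, stepSign f l

lemma stepSign_eq_one_or (i : ZMod n) : stepSign f i = 1 ∨ stepSign f i = -1 := by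
  unfold stepSign
  split_ifs <;> simp

lemma apply_add_one_eq (hf : IsHom (CycAdj n) (CycAdj m) f) (i : ZMod n) :
    f (i + 1) = f i + stepSign f i := by
  unfold stepSign
  split_ifs with h
  · simpa using h
  · rcases hf i (i + 1) (Or.inl rfl) with h' | h'
    · exact absurd h' h
    · rw [h']
      push_cast
      ring

lemma walk_succ (j : ℕ) : walk f (j + 1) = walk f j + stepSign f j :=
  sum_range_succ ..

lemma intCast_walk (hf : IsHom (CycAdj n) (CycAdj m) f) (j : ℕ) :
    (walk f j : ZMod m) = f j - f 0 := by
  induction j with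
  | zero => simp [walk]
  | succ j ih =>
    rw [walk_succ, Int.cast_add, ih, Nat.cast_succ, apply_add_one_eq hf]
    ring

lemma natAbs_walk_le_and_two_dvd (j : ℕ) : (walk f j).natAbs ≤ j ∧ 2 ∣ walk f j - j := by
  induction j with
  | zero => simp [walk]
  | succ j ih =>
    rw [walk_succ]
    rcases stepSign_eq_one_or (f := f) j with h | h <;> rw [h] <;> push_cast <;> omega

/-- The winding number vanishes: the displacement is an even multiple of `m` of absolute value
less than `2m`. -/
lemma walk_self_eq_zero (hf : IsHom (CycAdj n) (CycAdj m) f) (hn : Even n) (hm : Odd m)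
    (hnm : n < 2 * m) : walk f n = 0 := by
  obtain ⟨hle, hpar⟩ := natAbs_walk_le_and_two_dvd (f := f) n
  obtain ⟨t, ht⟩ : (m : ℤ) ∣ walk f n := by
    rw [← ZMod.intCast_zmod_eq_zero_iff_dvd, intCast_walk hf, ZMod.natCast_self, sub_self]
  obtain ⟨s, rfl⟩ : Even t := by
    have : Even (walk f n) := by
      obtain ⟨a, rfl⟩ := hn
      rw [even_iff_two_dvd]
      push_cast at hpar
      omega
    rw [ht, Int.even_mul] at this
    exact this.resolve_left (by exact_mod_cast Nat.not_even_iff_odd.mpr hm)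
  refine Int.eq_zero_of_abs_lt_dvd (m := 2 * m) ⟨s, by rw [ht]; ring⟩ ?_
  rw [Int.abs_eq_natAbs]
  omega

lemma walk_periodic (h : walk f n = 0) : Periodic (walk f) n := fun j => by
  rw [add_comm, walk, sum_range_add, ← walk, h, zero_add, walk]
  simp

theorem exists_isHeight_lift [NeZero n] (hf : IsHom (CycAdj n) (CycAdj m) f) (hn : Even n)
    (hm : Odd m) (hnm : n < 2 * m) : ∃ F : ZMod n → ℤ, IsHeight F ∧ Int.cast ∘ F = f := by
  obtain ⟨c, hc⟩ := ZMod.intCast_surjective (f 0)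
  have hper := walk_periodic (walk_self_eq_zero hf hn hm hnm)
  set F : ZMod n → ℤ := fun i => c + walk f i.val
  have hF : ∀ j : ℕ, F j = c + walk f j := fun j => by
    simp only [F, ZMod.val_natCast, hper.map_mod_nat]
  refine ⟨F, fun i => ?_, funext fun i => ?_⟩
  · rw [← ZMod.natCast_zmod_val i, ← Nat.cast_succ, hF, hF, walk_succ]
    rcases stepSign_eq_one_or (f := f) i.val with h | h <;> rw [h] <;> omega
  · rw [comp_apply, ← ZMod.natCast_zmod_val i, hF, Int.cast_add, hc, intCast_walk hf]
    ring

end Lift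

/-- For `3 ≤ r ≤ 2k`, the even cycle `C_{2r}` is `C_{2k+1}`-mixing: any two homomorphisms
from `C_{2r}` to `C_{2k+1}` are connected by a sequence of single-vertex recolourings
through homomorphisms. -/
theorem stmt_16 (r k : ℕ) (hr : 3 ≤ r) (hrk : r ≤ 2 * k)
    (f g : ZMod (2 * r) → ZMod (2 * k + 1))
    (hf : IsHom (CycAdj (2 * r)) (CycAdj (2 * k + 1)) f)
    (hg : IsHom (CycAdj (2 * r)) (CycAdj (2 * k + 1)) g) :
    Relation.ReflTransGen (Step (CycAdj (2 * r)) (CycAdj (2 * k + 1))) f g := by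
  have : NeZero (2 * r) := ⟨by omega⟩
  have hn : Even (2 * r) := even_two_mul r
  have hm : Odd (2 * k + 1) := odd_two_mul_add_one k
  have hnm : 2 * r < 2 * (2 * k + 1) := by omega
  obtain ⟨F, hF, rfl⟩ := exists_isHeight_lift hf hn hm hnm
  obtain ⟨G, hG, rfl⟩ := exists_isHeight_lift hg hn hm hnm
  exact reachable_of_odd hm (by omega) hF hG
end

section
/- There is no homomorphism from the path P_{2k} (on 2k vertices) to the odd cycle C_{2k+1} mapping both endpoints of the path to the same vertex; but for any two distinct vertices u, v of C_{2k+1}, there is a homomorphism from P_{2k} to C_{2k+1} mapping one endpoint to u and the other to v. -/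
/-- A homomorphism from the path `P_{2k}` (on the `2k` vertices `0, …, 2k-1`, consecutive
integers adjacent) to the odd cycle `C_{2k+1}`, encoded on `ℕ`: only the values
`f 0, …, f (2k-1)` are constrained. -/
def PathHom (k : ℕ) (f : ℕ → ZMod (2 * k + 1)) : Prop :=
  ∀ i : ℕ, i + 1 < 2 * k → CycAdj (2 * k + 1) (f i) (f (i + 1))

/-- No homomorphism from `P_{2k}` to `C_{2k+1}` maps both endpoints to the same vertex,
but for any two distinct vertices `u, v` of `C_{2k+1}` there is a homomorphism mapping
one endpoint to `u` and the other to `v`. -/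
theorem stmt_17 (k : ℕ) (hk : 1 ≤ k) :
    (¬ ∃ f : ℕ → ZMod (2 * k + 1), PathHom k f ∧ f 0 = f (2 * k - 1)) ∧
    (∀ u v : ZMod (2 * k + 1), u ≠ v →
      ∃ f : ℕ → ZMod (2 * k + 1), PathHom k f ∧ f 0 = u ∧ f (2 * k - 1) = v) := by
  constructor
  · rintro ⟨f, hf, hend⟩
    have key : ∀ j, j ≤ 2 * k - 1 → ∃ m : ℤ,
        f j = f 0 + (m : ZMod (2 * k + 1)) ∧ m.natAbs ≤ j ∧ m % 2 = (j : ℤ) % 2 := by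
      intro j
      induction j with
      | zero => intro _; exact ⟨0, by simp, by simp, by simp⟩
      | succ j ih =>
        intro hj
        obtain ⟨m, hm1, hm2, hm3⟩ := ih (Nat.le_of_succ_le hj)
        have hlt : j + 1 < 2 * k := by omega
        rcases hf j hlt with h | h
        · refine ⟨m + 1, ?_, by omega, by push_cast; omega⟩
          rw [h, hm1]; push_cast; ring
        · refine ⟨m - 1, ?_, by omega, by push_cast; omega⟩
          have : f (j + 1) = f j - 1 := by rw [h]; ring
          rw [this, hm1]; push_cast; ring
    obtain ⟨m, hm1, hm2, hm3⟩ := key (2 * k - 1) le_rfl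
    rw [← hend, left_eq_add] at hm1
    have hdvd : ((2 * k + 1 : ℕ) : ℤ) ∣ m :=
      (ZMod.intCast_zmod_eq_zero_iff_dvd m (2 * k + 1)).mp hm1
    have hm0 : m = 0 := by
      by_contra h0
      have hpos : (0 : ℤ) < (m.natAbs : ℤ) := by omega
      have hle := Int.le_of_dvd hpos (Int.dvd_natAbs.mpr hdvd)
      omega
    omega
  · intro u v huv
    have hNZ : NeZero (2 * k + 1) := ⟨by omega⟩
    obtain ⟨t, ht⟩ : ∃ t : ℕ, t = (v - u).val := ⟨_, rfl⟩
    have htn : t < 2 * k + 1 := ht ▸ ZMod.val_lt _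
    have hvu : ((t : ℕ) : ZMod (2 * k + 1)) = v - u := by
      rw [ht]; simp [ZMod.natCast_val, ZMod.cast_id]
    have ht0 : t ≠ 0 := by
      intro h
      have hz : (v - u).val = 0 := by omega
      exact huv (sub_eq_zero.mp ((ZMod.val_eq_zero _).mp hz)).symm
    obtain ⟨p, hp⟩ : ∃ p : ℕ, p = if t % 2 = 1 then k + (t - 1) / 2 else t / 2 - 1 := ⟨_, rfl⟩
    have hple : p ≤ 2 * k - 1 := by
      rcases Nat.mod_two_eq_zero_or_one t with h | h <;> simp [h] at hp <;> omega
    refine ⟨fun i => u + ((min i p : ℕ) : ZMod (2 * k + 1))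
        - ((i - min i p : ℕ) : ZMod (2 * k + 1)), ?_, ?_, ?_⟩
    · intro i hi
      dsimp only
      rcases lt_or_ge i p with h | h
      · left
        have h1 : min i p = i := by omega
        have h2 : min (i + 1) p = i + 1 := by omega
        rw [h1, h2]
        simp only [Nat.sub_self]
        push_cast
        ring
      · right
        have h1 : min i p = p := by omega
        have h2 : min (i + 1) p = p := by omega
        rw [h1, h2]
        have h3 : i + 1 - p = (i - p) + 1 := by omega
        rw [h3]
        push_cast
        ring
    · simp
    · dsimp only
      have h1 : min (2 * k - 1) p = p := by omega
      rw [h1]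
      have hpq : ((p : ℕ) : ZMod (2 * k + 1)) - ((2 * k - 1 - p : ℕ) : ZMod (2 * k + 1))
          = ((t : ℕ) : ZMod (2 * k + 1)) := by
        rcases Nat.mod_two_eq_zero_or_one t with h | h
        · -- t even: (2k-1-p) + t = p + (2k+1)
          have hkey : (2 * k - 1 - p) + t = p + (2 * k + 1) := by
            simp [h] at hp; omega
          have hc := congrArg (fun x : ℕ => (x : ZMod (2 * k + 1))) hkey
          push_cast at hc
          have hn0 : (2 * (k : ZMod (2 * k + 1)) + 1) = 0 := by
            have := ZMod.natCast_self (2 * k + 1); push_cast at this; exact this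
          linear_combination -hc - hn0
        · -- t odd: p = (2k-1-p) + t
          have hkey : p = (2 * k - 1 - p) + t := by
            simp [h] at hp; omega
          have hc := congrArg (fun x : ℕ => (x : ZMod (2 * k + 1))) hkey
          push_cast at hc
          linear_combination hc
      linear_combination hpq + hvu
end
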